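/- Let E, F ⊂ ℝ^N be measurable sets of equal positive Gaussian measure with γ(F△E)/γ(F) ≤ κ·𝒜_γ(F) for some 0 < κ < 1/2. Then 𝒜_γ(E) ≥ ((1−2κ)/(1+2κ))·𝒜_γ(F). -/

import Mathlib

open MeasureTheory

/-- The standard Gaussian measure on `ℝ^N`. -/
noncomputable def gaussMeasure (N : ℕ) : Measure (EuclideanSpace ℝ (Fin N)) :=
  volume.withDensity
    (fun x => ENNReal.ofReal ((2 * Real.pi) ^ (-(N:ℝ)/2) * Real.exp (-‖x‖ ^ 2 / 2)))

/-- The one-dimensional standard Gaussian distribution function. -/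
noncomputable def Phi (r : ℝ) : ℝ :=
  (2 * Real.pi) ^ (-(1:ℝ)/2) * ∫ t in Set.Iio r, Real.exp (-t ^ 2 / 2)

/-- The halfspace `{x : x·ω < r}`. -/
def halfspace (N : ℕ) (ω : EuclideanSpace ℝ (Fin N)) (r : ℝ) :
    Set (EuclideanSpace ℝ (Fin N)) := {x | (inner ℝ x ω : ℝ) < r}

/-- The Gaussian Fraenkel asymmetry of a set `Ω`. -/
noncomputable def gaussAsym (N : ℕ) (Ω : Set (EuclideanSpace ℝ (Fin N))) : ℝ :=
  sInf {a : ℝ | ∃ ω : EuclideanSpace ℝ (Fin N), ∃ r : ℝ, ‖ω‖ = 1 ∧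
    Phi r = (gaussMeasure N Ω).toReal ∧
    a = (gaussMeasure N (symmDiff Ω (halfspace N ω r))).toReal / (gaussMeasure N Ω).toReal}

/-!
For every halfspace `H` admissible for `E` (hence also for `F`, the two sets having the same
measure `m`), the triangle inequality for `△` gives
`γ(E△H) ≥ γ(F△H) - γ(F△E) ≥ m 𝒜_γ(F) - κ m 𝒜_γ(F)`, so `𝒜_γ(E) ≥ (1 - κ) 𝒜_γ(F)`,
and `(1 - 2κ)/(1 + 2κ) ≤ 1 - κ` for `0 < κ < 1/2`.
-/

section GaussianAsymmetry

variable {N : ℕ}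

instance isFiniteMeasure_gaussMeasure : IsFiniteMeasure (gaussMeasure N) := by
  refine isFiniteMeasure_withDensity_ofReal (Integrable.const_mul ?_ _).2
  have hint : ∫ x : EuclideanSpace ℝ (Fin N), Real.exp (-‖x‖ ^ 2 / 2) ≠ 0 := by
    simp_rw [neg_div, div_eq_inv_mul, ← neg_mul]
    rw [GaussianFourier.integral_rexp_neg_mul_sq_norm (by norm_num)]
    positivity
  exact Integrable.of_integral_ne_zero hint

theorem gaussAsym_nonneg (Ω : Set (EuclideanSpace ℝ (Fin N))) : 0 ≤ gaussAsym N Ω :=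
  Real.sInf_nonneg (by rintro _ ⟨ω, r, -, -, rfl⟩; positivity)

theorem gaussAsym_mul_le {Ω : Set (EuclideanSpace ℝ (Fin N))} {ω : EuclideanSpace ℝ (Fin N)}
    {r : ℝ} (hω : ‖ω‖ = 1) (hr : Phi r = (gaussMeasure N Ω).toReal) :
    gaussAsym N Ω * (gaussMeasure N Ω).toReal ≤
      (gaussMeasure N (symmDiff Ω (halfspace N ω r))).toReal := by
  rcases ENNReal.toReal_nonneg.eq_or_lt with hm | hm
  · rw [← hm, mul_zero]
    exact ENNReal.toReal_nonneg
  · rw [← le_div_iff₀ hm]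
    refine csInf_le ⟨0, ?_⟩ ⟨ω, r, hω, hr, rfl⟩
    rintro _ ⟨ω, r, -, -, rfl⟩
    positivity

-- With no admissible halfspace the infimum is `sInf ∅`, which is `0` in `ℝ`.
theorem gaussAsym_eq_zero_of_forall_ne {Ω : Set (EuclideanSpace ℝ (Fin N))}
    (h : ∀ ω : EuclideanSpace ℝ (Fin N), ‖ω‖ = 1 → ∀ r, Phi r ≠ (gaussMeasure N Ω).toReal) :
    gaussAsym N Ω = 0 := by
  rw [gaussAsym, ← Real.sInf_empty]
  congr
  refine Set.eq_empty_of_forall_notMem ?_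
  rintro _ ⟨ω, r, hω, hr, -⟩
  exact h ω hω r hr

theorem one_sub_mul_gaussAsym_le {E F : Set (EuclideanSpace ℝ (Fin N))}
    (heq : gaussMeasure N E = gaussMeasure N F) (hpos : 0 < gaussMeasure N F) {κ : ℝ}
    (hclose : (gaussMeasure N (symmDiff F E)).toReal / (gaussMeasure N F).toReal ≤
      κ * gaussAsym N F) :
    (1 - κ) * gaussAsym N F ≤ gaussAsym N E := by
  have hm : 0 < (gaussMeasure N F).toReal := ENNReal.toReal_pos hpos.ne' (measure_ne_top _ _)
  by_cases hadm :
      ∃ ω : EuclideanSpace ℝ (Fin N), ‖ω‖ = 1 ∧ ∃ r, Phi r = (gaussMeasure N F).toReal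
  · obtain ⟨ω₀, hω₀, r₀, hr₀⟩ := hadm
    refine le_csInf ⟨_, ω₀, r₀, hω₀, heq ▸ hr₀, rfl⟩ ?_
    rintro _ ⟨ω, r, hω, hr, rfl⟩
    rw [heq] at hr ⊢
    rw [le_div_iff₀ hm]
    rw [div_le_iff₀ hm] at hclose
    have hF := gaussAsym_mul_le hω hr
    have htri : (gaussMeasure N (symmDiff F (halfspace N ω r))).toReal ≤
        (gaussMeasure N (symmDiff F E)).toReal +
          (gaussMeasure N (symmDiff E (halfspace N ω r))).toReal :=
      measureReal_symmDiff_le _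
    linarith
  · push Not at hadm
    rw [gaussAsym_eq_zero_of_forall_ne (heq ▸ hadm), mul_zero]
    exact gaussAsym_nonneg E

end GaussianAsymmetry

theorem transfer_of_asymmetry_general (N : ℕ) (E F : Set (EuclideanSpace ℝ (Fin N)))
    (heq : gaussMeasure N E = gaussMeasure N F) (hpos : 0 < gaussMeasure N F)
    (κ : ℝ) (hκ0 : 0 < κ) (hκ : κ < 1/2)
    (hclose : (gaussMeasure N (symmDiff F E)).toReal / (gaussMeasure N F).toReal ≤
      κ * gaussAsym N F) :
    gaussAsym N E ≥ ((1 - 2 * κ) / (1 + 2 * κ)) * gaussAsym N F := by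
  have hconst : (1 - 2 * κ) / (1 + 2 * κ) ≤ 1 - κ := by
    rw [div_le_iff₀ (by linarith)]
    nlinarith
  calc (1 - 2 * κ) / (1 + 2 * κ) * gaussAsym N F
      ≤ (1 - κ) * gaussAsym N F := mul_le_mul_of_nonneg_right hconst (gaussAsym_nonneg F)
    _ ≤ gaussAsym N E := one_sub_mul_gaussAsym_le heq hpos hclose

theorem transfer_of_asymmetry (N : ℕ) (E F : Set (EuclideanSpace ℝ (Fin N)))
    (hE : MeasurableSet E) (hF : MeasurableSet F)
    (heq : gaussMeasure N E = gaussMeasure N F) (hpos : 0 < gaussMeasure N F)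
    (κ : ℝ) (hκ0 : 0 < κ) (hκ : κ < 1/2)
    (hclose : (gaussMeasure N (symmDiff F E)).toReal / (gaussMeasure N F).toReal ≤
      κ * gaussAsym N F) :
    gaussAsym N E ≥ ((1 - 2 * κ) / (1 + 2 * κ)) * gaussAsym N F :=
  transfer_of_asymmetry_general N E F heq hpos κ hκ0 hκ hclose
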